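/- Consider the one-dimensional discrete-time mean-variance functional J_n(u) = (μ − r)·∫_n^T u_s·e^{r(T−s)} ds − λσ²·∫_n^T u_s²·e^{2r(T−s)} ds over piecewise constant deterministic strategies u on intervals (k, k+1]. The unique time-consistent (backward-recursively) optimal strategy is û_{n+1} = (μ − r)/(λσ²) · 1/(e^{r(T−n)} + e^{r(T−n−1)}) for all n ∈ {0, ..., T−1}. -/

import Mathlib

open MeasureTheory intervalIntegral

/-- The discrete-time mean-variance functional over piecewise constant deterministic
strategies `u` (with `u (k+1)` the investment on the interval `(k, k+1]`, encoded via the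
ceiling function):
`J_n(u) = (μ−r)·∫_n^T u_s e^{r(T−s)} ds − λσ²·∫_n^T u_s² e^{2r(T−s)} ds`. -/
noncomputable def Jmv (μ r lam σ : ℝ) (T n : ℕ) (u : ℕ → ℝ) : ℝ :=
  (μ - r) * (∫ s in (n : ℝ)..(T : ℝ), u ⌈s⌉₊ * Real.exp (r * ((T : ℝ) - s)))
    - lam * σ ^ 2 * (∫ s in (n : ℝ)..(T : ℝ), (u ⌈s⌉₊) ^ 2 * Real.exp (2 * r * ((T : ℝ) - s)))

/-- The candidate optimal strategy `û_{n+1} = (μ−r)/(λσ²) · 1/(e^{r(T−n)} + e^{r(T−n−1)})`,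
here written for index `k = n+1`. -/
noncomputable def uhatMV (μ r lam σ : ℝ) (T : ℕ) (k : ℕ) : ℝ :=
  (μ - r) / (lam * σ ^ 2) *
    (1 / (Real.exp (r * ((T : ℝ) - ((k : ℝ) - 1))) + Real.exp (r * ((T : ℝ) - (k : ℝ)))))

/-!
Only the slice `(n, n+1]` of the integrals defining `J_n` sees `u_{n+1}`, so as a function of
`y = u_{n+1}` the functional is the concave quadratic `(μ - r) A y - λσ² B y² + const`, with
`A = ∫_n^{n+1} e^{r(T-s)} ds` and `B = ∫_n^{n+1} e^{2r(T-s)} ds`, whose unique maximiser is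
`(μ - r) A / (2λσ² B)`. The factorisation `e^{2ra} - e^{2rb} = (e^{ra} - e^{rb})(e^{ra} + e^{rb})`
gives `B = A (e^{r(T-n)} + e^{r(T-n-1)}) / 2`, and the maximiser is `û_{n+1}`.
-/

open Real

theorem intervalIntegrable_comp_natCeil (v : ℕ → ℝ) (a b : ℝ) :
    IntervalIntegrable (fun s : ℝ => v ⌈s⌉₊) volume a b := by
  set m : ℕ := ⌈max a b⌉₊
  set M : ℝ := (Finset.range (m + 1)).sup' Finset.nonempty_range_add_one fun k => |v k|
  rw [intervalIntegrable_iff]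
  refine Integrable.mono' (g := fun _ => M) (integrableOn_const measure_Ioc_lt_top.ne)
    (measurable_from_top.comp Nat.measurable_ceil).aestronglyMeasurable ?_
  refine (ae_restrict_iff' measurableSet_uIoc).mpr (Filter.Eventually.of_forall fun s hs => ?_)
  have hs_mem : ⌈s⌉₊ ∈ Finset.range (m + 1) :=
    Finset.mem_range.mpr (Nat.lt_succ_of_le (Nat.ceil_mono hs.2))
  exact Finset.le_sup' (fun k => |v k|) hs_mem

theorem integral_comp_natCeil_mul_of_ceil_eq {a b : ℝ} (hab : a ≤ b) (v : ℕ → ℝ) (g : ℝ → ℝ)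
    {k : ℕ} (hk : ∀ s ∈ Set.Ioc a b, ⌈s⌉₊ = k) :
    ∫ s in a..b, v ⌈s⌉₊ * g s = v k * ∫ s in a..b, g s := by
  rw [← intervalIntegral.integral_const_mul, integral_of_le hab, integral_of_le hab]
  exact setIntegral_congr_fun measurableSet_Ioc fun s hs => by rw [hk s hs]

/-- Replacing `v (n+1)` by `y` only changes the integrand on `(n, n+1]`, where `⌈s⌉₊ = n + 1`. -/
theorem integral_update_comp_natCeil_mul {n T : ℕ} (hn : n < T) (v : ℕ → ℝ) (y : ℝ)
    {g : ℝ → ℝ} (hg : Continuous g) :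
    ∫ s in (n : ℝ)..T, Function.update v (n + 1) y ⌈s⌉₊ * g s
      = y * (∫ s in (n : ℝ)..(n + 1), g s) + ∫ s in (n + 1 : ℝ)..T, v ⌈s⌉₊ * g s := by
  have hT : (n + 1 : ℝ) ≤ T := by exact_mod_cast hn
  have hint : ∀ (w : ℕ → ℝ) (a b : ℝ), IntervalIntegrable (fun s => w ⌈s⌉₊ * g s) volume a b :=
    fun w a b => (intervalIntegrable_comp_natCeil w a b).mul_continuousOn hg.continuousOn
  have head : ∫ s in (n : ℝ)..(n + 1), Function.update v (n + 1) y ⌈s⌉₊ * g s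
      = y * ∫ s in (n : ℝ)..(n + 1), g s := by
    refine (integral_comp_natCeil_mul_of_ceil_eq (by linarith) _ g fun s hs => ?_).trans
      (by rw [Function.update_self])
    rw [Nat.ceil_eq_iff (Nat.succ_ne_zero n)]
    push_cast
    exact ⟨by linarith [hs.1], hs.2⟩
  have tail : ∫ s in (n + 1 : ℝ)..T, Function.update v (n + 1) y ⌈s⌉₊ * g s
      = ∫ s in (n + 1 : ℝ)..T, v ⌈s⌉₊ * g s := by
    rw [integral_of_le hT, integral_of_le hT]
    refine setIntegral_congr_fun measurableSet_Ioc fun s hs => ?_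
    have hceil : n + 1 < ⌈s⌉₊ := Nat.lt_ceil.mpr (by exact_mod_cast hs.1)
    rw [Function.update_of_ne hceil.ne']
  rw [← integral_add_adjacent_intervals (hint _ _ _) (hint _ _ _), head, tail]

theorem Jmv_update_sub_update {n T : ℕ} (hn : n < T) (μ r lam σ : ℝ) (u : ℕ → ℝ) (x y : ℝ) :
    Jmv μ r lam σ T n (Function.update u (n + 1) y) - Jmv μ r lam σ T n (Function.update u (n + 1) x)
      = ((μ - r) * (∫ s in (n : ℝ)..(n + 1), exp (r * (T - s))) * y
          - lam * σ ^ 2 * (∫ s in (n : ℝ)..(n + 1), exp (2 * r * (T - s))) * y ^ 2)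
        - ((μ - r) * (∫ s in (n : ℝ)..(n + 1), exp (r * (T - s))) * x
          - lam * σ ^ 2 * (∫ s in (n : ℝ)..(n + 1), exp (2 * r * (T - s))) * x ^ 2) := by
  have hsq : ∀ (z : ℝ) (k : ℕ), Function.update u (n + 1) z k ^ 2
      = Function.update (fun k => u k ^ 2) (n + 1) (z ^ 2) k :=
    Function.apply_update (fun _ w => w ^ 2) u (n + 1)
  simp only [Jmv, hsq]
  rw [integral_update_comp_natCeil_mul hn u x (by fun_prop),
    integral_update_comp_natCeil_mul hn u y (by fun_prop),
    integral_update_comp_natCeil_mul hn _ (x ^ 2) (by fun_prop),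
    integral_update_comp_natCeil_mul hn _ (y ^ 2) (by fun_prop)]
  ring

theorem integral_exp_mul_sub {k : ℝ} (hk : k ≠ 0) (c a b : ℝ) :
    ∫ s in a..b, exp (k * (c - s)) = (exp (k * (c - a)) - exp (k * (c - b))) / k := by
  simp_rw [mul_sub]
  rw [integral_comp_sub_mul exp hk, integral_exp, smul_eq_mul, inv_mul_eq_div]

/-- The averaging identity behind `B = A (e^{r(T-n)} + e^{r(T-n-1)}) / 2`; for `r ≠ 0` it is the
factorisation `e^{2ra} - e^{2rb} = (e^{ra} - e^{rb})(e^{ra} + e^{rb})`. -/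
theorem integral_exp_two_mul_mul_sub (r c a b : ℝ) :
    ∫ s in a..b, exp (2 * r * (c - s))
      = (exp (r * (c - a)) + exp (r * (c - b))) / 2 * ∫ s in a..b, exp (r * (c - s)) := by
  rcases eq_or_ne r 0 with rfl | hr
  · simp only [mul_zero, zero_mul, exp_zero, intervalIntegral.integral_const]
    ring
  have hsq : ∀ t, exp (2 * r * t) = exp (r * t) ^ 2 := fun t => by
    rw [← exp_nat_mul]; ring_nf
  rw [integral_exp_mul_sub (mul_ne_zero two_ne_zero hr), integral_exp_mul_sub hr, hsq, hsq]
  field_simp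
  ring

theorem uhatMV_succ_eq_div (μ r lam σ : ℝ) (T n : ℕ) :
    uhatMV μ r lam σ T (n + 1)
      = (μ - r) * (∫ s in (n : ℝ)..(n + 1), exp (r * (T - s)))
        / (2 * (lam * σ ^ 2 * ∫ s in (n : ℝ)..(n + 1), exp (2 * r * (T - s)))) := by
  have hA : 0 < ∫ s in (n : ℝ)..(n + 1), exp (r * (T - s)) :=
    intervalIntegral_pos_of_pos (Continuous.intervalIntegrable (by fun_prop) _ _) (fun _ => exp_pos _) (lt_add_one _)
  rw [integral_exp_two_mul_mul_sub, uhatMV]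
  push_cast
  rw [add_sub_cancel_right, add_comm (exp _)]
  field_simp

theorem mul_sub_mul_sq_lt_vertex_of_ne {a c x : ℝ} (hc : 0 < c) (hx : x ≠ a / (2 * c)) :
    a * x - c * x ^ 2 < a * (a / (2 * c)) - c * (a / (2 * c)) ^ 2 := by
  have hx' : x - a / (2 * c) ≠ 0 := sub_ne_zero.mpr hx
  have hsq : 0 < c * (x - a / (2 * c)) ^ 2 := by positivity
  have hid : a * (a / (2 * c)) - c * (a / (2 * c)) ^ 2 - (a * x - c * x ^ 2)
      = c * (x - a / (2 * c)) ^ 2 := by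
    field_simp
    ring
  linarith

theorem stmt11_general (μ r lam σ : ℝ) (hσ : 0 < σ) (hlam : 0 < lam) (T : ℕ)
    (n : ℕ) (hn : n < T) (u : ℕ → ℝ)
    (hne : u (n + 1) ≠ uhatMV μ r lam σ T (n + 1)) :
    Jmv μ r lam σ T n u
      < Jmv μ r lam σ T n (Function.update u (n + 1) (uhatMV μ r lam σ T (n + 1))) := by
  have hB : 0 < ∫ s in (n : ℝ)..(n + 1), exp (2 * r * (T - s)) :=
    intervalIntegral_pos_of_pos (Continuous.intervalIntegrable (by fun_prop) _ _) (fun _ => exp_pos _) (lt_add_one _)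
  have hdiff := Jmv_update_sub_update hn μ r lam σ u (u (n + 1)) (uhatMV μ r lam σ T (n + 1))
  rw [Function.update_eq_self] at hdiff
  rw [uhatMV_succ_eq_div] at hne hdiff ⊢
  have hmax := mul_sub_mul_sq_lt_vertex_of_ne (by positivity) hne
  linarith

/-- the strategy `û` is the unique time-consistent (backward-recursively)
optimal strategy: at each step `n < T`, given that the strategy agrees with `û` on all later
intervals, deviating from `û_{n+1}` on `(n, n+1]` strictly decreases `J_n`. -/
theorem stmt11 (μ r lam σ : ℝ) (hr : r ≠ 0) (hσ : 0 < σ) (hlam : 0 < lam) (T : ℕ)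
    (n : ℕ) (hn : n < T) (u : ℕ → ℝ)
    (hu : ∀ k, n + 2 ≤ k → u k = uhatMV μ r lam σ T k)
    (hne : u (n + 1) ≠ uhatMV μ r lam σ T (n + 1)) :
    Jmv μ r lam σ T n u
      < Jmv μ r lam σ T n (Function.update u (n + 1) (uhatMV μ r lam σ T (n + 1))) :=
  stmt11_general μ r lam σ hσ hlam T n hn u hne
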